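/- Let A be an n×n complex matrix and R > 0 such that every eigenvalue λ of A satisfies |λ| < R. Then for every w ∈ ℂ, (1/(2πi)) ∮_{|σ|=R} exp(w·σ) · (σ·I − A)⁻¹ dσ = exp(w • A), where the integral is the counterclockwise circle integral over the circle of radius R centered at 0. In particular, taking w = log ρ with ρ > 0 gives (1/(2πi)) ∮_{|σ|=R} ρ^σ (σ·I − A)⁻¹ dσ = ρ^A. -/

import Mathlib

/-!
On a circle `|σ| = R` beyond the spectral radius the resolvent is the Neumann series
`(σ - a)⁻¹ = ∑ σ^(-(k+1)) aᵏ`. The series converges uniformly there because `‖aᵏ‖ / Rᵏ` is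
summable: `∑ zᵏ aᵏ` is the Taylor series of `(1 - z a)⁻¹`, which is holomorphic on the disc of
radius `1 / spectralRadius a`, so its radius of convergence is at least that. Integrating term
by term, Cauchy's formula for derivatives gives `(2πi)⁻¹ ∮ e^(wσ) σ^(-(k+1)) dσ = wᵏ / k!`, and
the series `∑ (w a)ᵏ / k!` is `exp (w a)`.
-/

attribute [local instance] Matrix.frobeniusNormedAddCommGroup Matrix.frobeniusNormedSpace
attribute [local instance] Matrix.frobeniusNormedRing Matrix.frobeniusNormedAlgebra

open scoped NNReal ENNReal Real
open Complex Metric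

namespace circleIntegral

variable {E : Type*} [NormedAddCommGroup E] [NormedSpace ℂ E]

theorem hasSum_integral_of_norm_le {ι : Type*} [Countable ι] {f : ι → ℂ → E} {F : ℂ → E}
    {c : ℂ} {R : ℝ} {C : ι → ℝ} (hf : ∀ i, CircleIntegrable (f i) c R) (hC : Summable C)
    (hfC : ∀ i, ∀ z ∈ sphere c |R|, ‖f i z‖ ≤ C i)
    (hF : ∀ z ∈ sphere c |R|, HasSum (fun i => f i z) (F z)) :
    HasSum (fun i => ∮ z in C(c, R), f i z) (∮ z in C(c, R), F z) := by
  have hmem := circleMap_mem_sphere' c R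
  refine intervalIntegral.hasSum_integral_of_dominated_convergence (fun i _ => |R| * C i)
    (fun i => (hf i).out.def'.1) (fun i => .of_forall fun θ _ => ?_)
    (.of_forall fun _ _ => hC.mul_left |R|) intervalIntegrable_const
    (.of_forall fun θ _ => (hF _ (hmem θ)).const_smul _)
  rw [norm_smul, deriv_circleMap, norm_mul, norm_circleMap_zero, norm_I, mul_one]
  exact mul_le_mul_of_nonneg_left (hfC i _ (hmem θ)) (abs_nonneg R)

theorem integral_cexp_mul_smul_inv_pow_smul [CompleteSpace E] {R : ℝ} (hR : 0 < R) (w : ℂ)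
    (k : ℕ) (b : E) :
    ∮ z in C(0, R), cexp (w * z) • (z ^ (k + 1))⁻¹ • b = (2 * π * I / k.factorial * w ^ k) • b := by
  have hdiff : DifferentiableOn ℂ (fun z => cexp (w * z)) (closedBall 0 R) := by fun_prop
  have hcauchy := hdiff.circleIntegral_one_div_sub_center_pow_smul hR k
  simp only [sub_zero, iteratedDeriv_cexp_const_mul, mul_zero, Complex.exp_zero, mul_one] at hcauchy
  simp_rw [smul_smul, mul_comm (cexp _), inv_eq_one_div]
  rw [integral_smul_const]
  exact congrArg (· • b) hcauchy

end circleIntegral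

theorem norm_cexp_mul_smul_inv_pow_smul_le {E : Type*} [NormedAddCommGroup E] [NormedSpace ℂ E]
    (w σ : ℂ) (k : ℕ) (b : E) :
    ‖cexp (w * σ) • (σ ^ (k + 1))⁻¹ • b‖ ≤ Real.exp (‖w‖ * ‖σ‖) / ‖σ‖ * (‖b‖ / ‖σ‖ ^ k) :=
  calc ‖cexp (w * σ) • (σ ^ (k + 1))⁻¹ • b‖ = ‖cexp (w * σ)‖ / ‖σ‖ * (‖b‖ / ‖σ‖ ^ k) := by
        rw [norm_smul, norm_smul, norm_inv, norm_pow, pow_succ']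
        ring
    _ ≤ Real.exp (‖w‖ * ‖σ‖) / ‖σ‖ * (‖b‖ / ‖σ‖ ^ k) := by
        gcongr
        simpa only [norm_mul] using norm_exp_le_exp_norm (w * σ)

namespace spectrum

variable {A : Type*} [NormedRing A] [NormedAlgebra ℂ A] [CompleteSpace A]

theorem hasFPowerSeriesOnBall_inverse_one_sub_smul_of_lt_inv_spectralRadius {a : A} {r : ℝ≥0}
    (hr0 : 0 < r) (hr : (r : ℝ≥0∞) < (spectralRadius ℂ a)⁻¹) :
    HasFPowerSeriesOnBall (fun z : ℂ => Ring.inverse (1 - z • a))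
      (fun n => ContinuousMultilinearMap.mkPiRing ℂ (Fin n) (a ^ n)) 0 r :=
  (hasFPowerSeriesOnBall_inverse_one_sub_smul ℂ a).exchange_radius
    ((differentiableOn_inverse_one_sub_smul hr).hasFPowerSeriesOnBall hr0)

theorem summable_norm_pow_div_pow {a : A} {R : ℝ} (h : spectralRadius ℂ a < ENNReal.ofReal R) :
    Summable fun n => ‖a ^ n‖ / R ^ n := by
  have hR : 0 < R := ENNReal.ofReal_pos.mp (pos_of_gt h)
  have hinv : ((R⁻¹.toNNReal : ℝ≥0) : ℝ≥0∞) < (spectralRadius ℂ a)⁻¹ := by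
    rwa [← ENNReal.ofReal.eq_def, ENNReal.ofReal_inv_of_pos hR, ENNReal.inv_lt_inv]
  obtain ⟨r, hr, hr'⟩ := ENNReal.lt_iff_exists_nnreal_btwn.mp hinv
  have hr0 : 0 < r := ENNReal.coe_pos.mp (pos_of_gt hr)
  have hradius := (hasFPowerSeriesOnBall_inverse_one_sub_smul_of_lt_inv_spectralRadius hr0 hr').r_le
  simpa [ContinuousMultilinearMap.norm_mkPiRing, Real.coe_toNNReal _ (inv_nonneg.mpr hR.le),
    div_eq_mul_inv] using FormalMultilinearSeries.summable_norm_mul_pow _ (hr.trans_le hradius)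

theorem hasSum_resolvent {a : A} {z : ℂ} (h : spectralRadius ℂ a < ‖z‖₊) :
    HasSum (fun n => (z ^ (n + 1))⁻¹ • a ^ n) (resolvent a z) := by
  have hz : z ≠ 0 := by rintro rfl; simp at h
  have hinv : (‖z⁻¹‖₊ : ℝ≥0∞) < (spectralRadius ℂ a)⁻¹ := by
    rwa [nnnorm_inv, ENNReal.coe_inv (nnnorm_ne_zero_iff.mpr hz), ENNReal.inv_lt_inv]
  obtain ⟨r, hr, hr'⟩ := ENNReal.lt_iff_exists_nnreal_btwn.mp hinv
  have hr0 : 0 < r := ENNReal.coe_pos.mp (pos_of_gt hr)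
  have hsum := (hasFPowerSeriesOnBall_inverse_one_sub_smul_of_lt_inv_spectralRadius hr0 hr').hasSum
    (y := z⁻¹) (by rw [mem_eball, edist_zero_right]; exact_mod_cast hr)
  simp only [ContinuousMultilinearMap.mkPiRing_apply, Finset.prod_const, Finset.card_univ,
    Fintype.card_fin, zero_add] at hsum
  have hres : z • resolvent a z = Ring.inverse (1 - z⁻¹ • a) := by
    simpa [resolvent, Units.smul_def] using units_smul_resolvent_self (r := Units.mk0 z hz) (a := a)
  rw [← inv_smul_smul₀ hz (resolvent a z), hres]
  simpa only [smul_smul, pow_succ', mul_inv, inv_pow] using hsum.const_smul z⁻¹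

theorem spectralRadius_lt_ofReal {a : A} {R : ℝ} (hR : 0 < R)
    (h : ∀ z ∈ spectrum ℂ a, ‖z‖ < R) : spectralRadius ℂ a < ENNReal.ofReal R := by
  rcases (spectrum ℂ a).eq_empty_or_nonempty with hempty | hne
  · simp [spectralRadius, hempty, hR]
  · exact spectralRadius_lt_of_forall_lt_of_nonempty hne fun z hz =>
      Real.lt_toNNReal_iff_coe_lt.mpr (h z hz)

theorem circleIntegral_cexp_mul_smul_resolvent {a : A} {R : ℝ}
    (h : spectralRadius ℂ a < ENNReal.ofReal R) (w : ℂ) :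
    (2 * π * I)⁻¹ • ∮ σ in C(0, R), cexp (w * σ) • resolvent a σ = NormedSpace.exp (w • a) := by
  have hR : 0 < R := ENNReal.ofReal_pos.mp (pos_of_gt h)
  have hsphere : ∀ σ ∈ sphere (0 : ℂ) |R|, ‖σ‖ = R := fun σ hσ => by
    rwa [mem_sphere_zero_iff_norm, abs_of_pos hR] at hσ
  have hterms : HasSum (fun k => ∮ σ in C(0, R), cexp (w * σ) • (σ ^ (k + 1))⁻¹ • a ^ k)
      (∮ σ in C(0, R), cexp (w * σ) • resolvent a σ) := by
    refine circleIntegral.hasSum_integral_of_norm_le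
      (C := fun k => Real.exp (‖w‖ * R) / R * (‖a ^ k‖ / R ^ k)) (fun k => ?_)
      ((summable_norm_pow_div_pow h).mul_left _) (fun k σ hσ => ?_)
      (fun σ hσ => (hasSum_resolvent ?_).const_smul _)
    · refine ContinuousOn.circleIntegrable' (ContinuousOn.smul (by fun_prop) ?_)
      refine ((continuousOn_id.pow _).inv₀ fun σ hσ => ?_).smul continuousOn_const
      exact pow_ne_zero _ (norm_ne_zero_iff.mp ((hsphere σ hσ).trans_ne hR.ne'))
    · simpa only [hsphere σ hσ] using norm_cexp_mul_smul_inv_pow_smul_le w σ k (a ^ k)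
    · rwa [← ENNReal.ofReal_coe_nnreal, coe_nnnorm, hsphere σ hσ]
  have hcoeff : ∀ k : ℕ, ∮ σ in C(0, R), cexp (w * σ) • (σ ^ (k + 1))⁻¹ • a ^ k
      = (2 * π * I) • ((k.factorial : ℂ)⁻¹ • (w • a) ^ k) := fun k => by
    rw [circleIntegral.integral_cexp_mul_smul_inv_pow_smul hR, smul_pow, smul_smul, smul_smul,
      div_eq_mul_inv]
  simp_rw [hcoeff] at hterms
  rw [hterms.unique ((NormedSpace.exp_series_hasSum_exp' (w • a)).const_smul _),
    inv_smul_smul₀ two_pi_I_ne_zero]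

end spectrum

theorem circleIntegral_resolvent_exp {n : ℕ}
    (A : Matrix (Fin n) (Fin n) ℂ) (R : ℝ) (hR : 0 < R)
    (hspec : ∀ l ∈ spectrum ℂ A, ‖l‖ < R) :
    (∀ w : ℂ,
      (2 * Real.pi * Complex.I)⁻¹ •
          (∮ σ in C(0, R),
            Complex.exp (w * σ) • (σ • (1 : Matrix (Fin n) (Fin n) ℂ) - A)⁻¹)
        = NormedSpace.exp (w • A)) ∧
    (∀ ρ : ℝ, 0 < ρ →
      (2 * Real.pi * Complex.I)⁻¹ •
          (∮ σ in C(0, R),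
            ((ρ : ℂ) ^ σ) • (σ • (1 : Matrix (Fin n) (Fin n) ℂ) - A)⁻¹)
        = NormedSpace.exp ((Real.log ρ : ℂ) • A)) := by
  have hresolvent : ∀ σ : ℂ, (σ • (1 : Matrix (Fin n) (Fin n) ℂ) - A)⁻¹ = resolvent A σ :=
    fun σ => by rw [Matrix.nonsing_inv_eq_ringInverse, resolvent, Algebra.algebraMap_eq_smul_one]
  have hexp : ∀ w : ℂ, (2 * π * I)⁻¹ • (∮ σ in C(0, R), cexp (w * σ) • resolvent A σ)
      = NormedSpace.exp (w • A) :=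
    spectrum.circleIntegral_cexp_mul_smul_resolvent (spectrum.spectralRadius_lt_ofReal hR hspec)
  refine ⟨by simpa only [hresolvent] using hexp, fun ρ hρ => ?_⟩
  have hcpow : ∀ σ : ℂ, (ρ : ℂ) ^ σ = cexp (Real.log ρ * σ) := fun σ => by
    rw [cpow_def_of_ne_zero (ofReal_ne_zero.mpr hρ.ne'), ofReal_log hρ.le]
  simpa only [hresolvent, hcpow] using hexp (Real.log ρ)
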